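/- arXiv:math/9910138 — 2 statements merged into one kernel-verified Lean document; each statement's English description precedes it below -/
import Mathlib

section
/- The function h(u,v) = 3/(2 sinh²(√3(u+v)/2)) + 1, defined for u+v ≠ 0, satisfies the Țițeica PDE (log h)_{uv} = h - 1/h². -/
/-!
Everything depends on `u + v` only. With `y = √3 (u + v)` and `c = cosh y`, the identity
`2 sinh² (y/2) = c - 1` gives `h = F y` for `F = 3/(c - 1) + 1 = (c + 2)/(c - 1)`, and the chain
rule gives `(log h)_{uv} = 3 (log F)''(y)`. Differentiating twice, using `sinh² = c² - 1`,
`(log F)'' = 3 (c² + c + 1)/((c - 1)(c + 2)²)`, and `9 (c² + c + 1) = (c + 2)³ - (c - 1)³`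
turns this into `3 (log F)'' = F - 1/F²`.
-/

open Real Filter Topology

section
variable {𝕜 F : Type*} [NontriviallyNormedField 𝕜] [NormedAddCommGroup F] [NormedSpace 𝕜 F]

theorem deriv_deriv_comp_add (g : 𝕜 → F) (u v : 𝕜) :
    deriv (fun v' => deriv (fun u' => g (u' + v')) u) v = deriv (deriv g) (u + v) := by
  simp only [deriv_comp_add_const]
  exact deriv_comp_const_add (deriv g) u v

theorem deriv_deriv_comp_mul_left (g : 𝕜 → F) (c x : 𝕜) :
    deriv (deriv fun y => g (c * y)) x = c ^ 2 • deriv (deriv g) (c * x) := by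
  have hg : deriv (fun y => g (c * y)) = fun y => c • deriv g (c * y) :=
    funext (deriv_comp_mul_left c g)
  rw [hg, deriv_fun_const_smul_field, deriv_comp_mul_left, smul_smul, sq]

end

theorem two_mul_sinh_half_sq (y : ℝ) : 2 * sinh (y / 2) ^ 2 = cosh y - 1 := by
  have h := cosh_two_mul (y / 2)
  rw [mul_div_cancel₀ y two_ne_zero] at h
  linarith [cosh_sq (y / 2)]

noncomputable def titeicaProfile (y : ℝ) : ℝ := 3 / (cosh y - 1) + 1

theorem hasDerivAt_log_titeicaProfile {y : ℝ} (hy : y ≠ 0) :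
    HasDerivAt (fun y => log (titeicaProfile y))
      (-3 * sinh y / ((cosh y - 1) * (cosh y + 2))) y := by
  have hc : 0 < cosh y - 1 := sub_pos.2 (one_lt_cosh.2 hy)
  have hF :=
    ((hasDerivAt_const y (3 : ℝ)).fun_div ((hasDerivAt_cosh y).sub_const 1) hc.ne').add_const 1
  have hpos : 0 < 3 / (cosh y - 1) + 1 := by positivity
  refine (hF.log hpos.ne').congr_deriv ?_
  have hc2 : cosh y + 2 ≠ 0 := by linarith
  rw [div_add_one hc.ne', show 3 + (cosh y - 1) = cosh y + 2 by ring]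
  field_simp
  ring

theorem hasDerivAt_neg_three_mul_sinh_div {y : ℝ} (hy : y ≠ 0) :
    HasDerivAt (fun y => -3 * sinh y / ((cosh y - 1) * (cosh y + 2)))
      (3 * (cosh y ^ 2 + cosh y + 1) / ((cosh y - 1) * (cosh y + 2) ^ 2)) y := by
  have hc : cosh y - 1 ≠ 0 := (sub_pos.2 (one_lt_cosh.2 hy)).ne'
  have hc2 : cosh y + 2 ≠ 0 := by linarith [cosh_pos y]
  have hD : HasDerivAt (fun y => (cosh y - 1) * (cosh y + 2))
      (sinh y * (cosh y + 2) + (cosh y - 1) * sinh y) y :=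
    ((hasDerivAt_cosh y).sub_const 1).mul ((hasDerivAt_cosh y).add_const 2)
  refine (((hasDerivAt_sinh y).const_mul (-3)).fun_div hD (mul_ne_zero hc hc2)).congr_deriv ?_
  field_simp
  linear_combination (2 * cosh y + 1) * sinh_sq y

theorem deriv_deriv_log_titeicaProfile {y : ℝ} (hy : y ≠ 0) :
    deriv (deriv fun y => log (titeicaProfile y)) y
      = 3 * (cosh y ^ 2 + cosh y + 1) / ((cosh y - 1) * (cosh y + 2) ^ 2) := by
  have hderiv : deriv (fun y => log (titeicaProfile y))
      =ᶠ[𝓝 y] fun y => -3 * sinh y / ((cosh y - 1) * (cosh y + 2)) := by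
    filter_upwards [isOpen_ne.mem_nhds hy] with z hz
    exact (hasDerivAt_log_titeicaProfile hz).deriv
  rw [hderiv.deriv_eq, (hasDerivAt_neg_three_mul_sinh_div hy).deriv]

theorem three_mul_deriv_deriv_log_titeicaProfile {y : ℝ} (hy : y ≠ 0) :
    3 * deriv (deriv fun y => log (titeicaProfile y)) y
      = titeicaProfile y - 1 / titeicaProfile y ^ 2 := by
  have hc : cosh y - 1 ≠ 0 := (sub_pos.2 (one_lt_cosh.2 hy)).ne'
  have hc2 : cosh y + 2 ≠ 0 := by linarith [cosh_pos y]
  rw [deriv_deriv_log_titeicaProfile hy, titeicaProfile, div_add_one hc,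
    show 3 + (cosh y - 1) = cosh y + 2 by ring]
  field_simp
  ring

/-- The function `h(u,v) = 3/(2 sinh²(√3(u+v)/2)) + 1`, for `u+v ≠ 0`, satisfies the
Țițeica PDE `(log h)_{uv} = h - 1/h²`. -/
theorem stmt_2 (h : ℝ → ℝ → ℝ)
    (hdef : ∀ u v : ℝ, h u v = 3 / (2 * Real.sinh (Real.sqrt 3 * (u + v) / 2) ^ 2) + 1) :
    ∀ u v : ℝ, u + v ≠ 0 →
      deriv (fun v' => deriv (fun u' => Real.log (h u' v')) u) v
        = h u v - 1 / (h u v) ^ 2 := by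
  intro u v huv
  have hprofile : ∀ u v, h u v = titeicaProfile (√3 * (u + v)) := by
    intro u v
    rw [hdef, two_mul_sinh_half_sq, titeicaProfile]
  simp only [hprofile]
  rw [deriv_deriv_comp_add (fun t => log (titeicaProfile (√3 * t))),
    deriv_deriv_comp_mul_left (fun y => log (titeicaProfile y)), smul_eq_mul,
    sq_sqrt zero_le_three]
  exact three_mul_deriv_deriv_log_titeicaProfile (mul_ne_zero (by positivity) huv)
end

section
/- Let ω be a smooth solution of the Țițeica PDE ω_{uv} = e^ω - e^{-2ω}. Then D_u(-½ u e^{-2ω} - ½ v ω_v² - u e^ω) + D_v(½ u ω_u² + v e^ω + ½ v e^{-2ω}) = 0. -/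
private lemma hderiv_fst {E : Type*} [NormedAddCommGroup E] [NormedSpace ℝ E]
    {G : ℝ × ℝ → E} (hG : Differentiable ℝ G) (u v : ℝ) :
    HasDerivAt (fun u' => G (u', v)) (fderiv ℝ G (u, v) (1, 0)) u := by
  have h : HasDerivAt (fun u' : ℝ => (u', v)) ((1 : ℝ), (0 : ℝ)) u :=
    (hasDerivAt_id u).prodMk (hasDerivAt_const u v)
  exact (hG (u, v)).hasFDerivAt.comp_hasDerivAt u h

private lemma hderiv_snd {E : Type*} [NormedAddCommGroup E] [NormedSpace ℝ E]
    {G : ℝ × ℝ → E} (hG : Differentiable ℝ G) (u v : ℝ) :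
    HasDerivAt (fun v' => G (u, v')) (fderiv ℝ G (u, v) (0, 1)) v := by
  have h : HasDerivAt (fun v' : ℝ => (u, v')) ((0 : ℝ), (1 : ℝ)) v :=
    (hasDerivAt_const v u).prodMk (hasDerivAt_id v)
  exact (hG (u, v)).hasFDerivAt.comp_hasDerivAt v h

/-- For a smooth solution `ω` of the Țițeica PDE `ω_{uv} = e^ω - e^{-2ω}`,
`D_u(-½ u e^{-2ω} - ½ v ω_v² - u e^ω) + D_v(½ u ω_u² + v e^ω + ½ v e^{-2ω}) = 0`. -/
theorem stmt_18 (ω : ℝ → ℝ → ℝ)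
    (hω : ContDiff ℝ (⊤ : ℕ∞) (fun p : ℝ × ℝ => ω p.1 p.2))
    (hsol : ∀ u v : ℝ,
      deriv (fun v' => deriv (fun u' => ω u' v') u) v
        = Real.exp (ω u v) - Real.exp (-2 * ω u v)) :
    ∀ u v : ℝ,
      deriv (fun u' => -(1 / 2) * u' * Real.exp (-2 * ω u' v)
          - (1 / 2) * v * (deriv (fun v' => ω u' v') v) ^ 2
          - u' * Real.exp (ω u' v)) u
        + deriv (fun v' => (1 / 2) * u * (deriv (fun u' => ω u' v') u) ^ 2
            + v' * Real.exp (ω u v') + (1 / 2) * v' * Real.exp (-2 * ω u v')) v = 0 := by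
  intro u v
  set F : ℝ × ℝ → ℝ := fun p => ω p.1 p.2 with hF
  have hFd : Differentiable ℝ F := hω.differentiable (by simp)
  have hF' : ContDiff ℝ (⊤ : ℕ∞) (fderiv ℝ F) := hω.fderiv_right (by simp)
  set G1 : ℝ × ℝ → ℝ := fun p => fderiv ℝ F p (1, 0) with hG1
  set G2 : ℝ × ℝ → ℝ := fun p => fderiv ℝ F p (0, 1) with hG2
  have hG1d : Differentiable ℝ G1 :=
    (hF'.clm_apply contDiff_const).differentiable (by simp)
  have hG2d : Differentiable ℝ G2 :=
    (hF'.clm_apply contDiff_const).differentiable (by simp)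
  -- second-derivative computations
  have hfd2 : ∀ (x : ℝ × ℝ) (w e : ℝ × ℝ),
      fderiv ℝ (fun p => fderiv ℝ F p w) x e = fderiv ℝ (fderiv ℝ F) x e w := by
    intro x w e
    rw [fderiv_clm_apply (hF'.differentiable (by simp) x) (differentiableAt_const w)]
    simp
  have hsymm : IsSymmSndFDerivAt ℝ F (u, v) :=
    hω.contDiffAt.isSymmSndFDerivAt (by rw [minSmoothness_of_isRCLikeNormedField]; exact WithTop.coe_le_coe.mpr (le_top : (2 : ℕ∞) ≤ ⊤))
  -- values
  set a : ℝ := G1 (u, v) with ha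
  set b : ℝ := G2 (u, v) with hb
  set E1 : ℝ := Real.exp (ω u v) with hE1
  set E2 : ℝ := Real.exp (-2 * ω u v) with hE2
  -- the mixed derivative, both orders
  have hm2 : fderiv ℝ G1 (u, v) (0, 1) = E1 - E2 := by
    have h1 : (fun v' => deriv (fun u' => ω u' v') u) = fun v' => G1 (u, v') := by
      funext v'
      exact (hderiv_fst hFd u v').deriv
    have := hsol u v
    rw [h1, (hderiv_snd hG1d u v).deriv] at this
    exact this
  have hm1 : fderiv ℝ G2 (u, v) (1, 0) = E1 - E2 := by
    rw [hG2, hfd2 (u, v) (0, 1) (1, 0), hsymm (1, 0) (0, 1), ← hfd2 (u, v) (1, 0) (0, 1)]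
    exact hm2
  -- derivative of the first expression
  have hωu : ∀ u' v', HasDerivAt (fun t => ω t v') (G1 (u', v')) u' := fun u' v' =>
    hderiv_fst hFd u' v'
  have hωv : ∀ u' v', HasDerivAt (fun t => ω u' t) (G2 (u', v')) v' := fun u' v' =>
    hderiv_snd hFd u' v'
  have hd1 : deriv (fun u' => -(1 / 2) * u' * Real.exp (-2 * ω u' v)
      - (1 / 2) * v * (deriv (fun v' => ω u' v') v) ^ 2
      - u' * Real.exp (ω u' v)) u
      = (-(1 / 2) * Real.exp (-2 * ω u v) + -(1 / 2) * u * (Real.exp (-2 * ω u v) * (-2 * a)))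
        - (1 / 2) * v * (2 * b ^ 1 * (fderiv ℝ G2 (u, v) (1, 0)))
        - (1 * Real.exp (ω u v) + u * (Real.exp (ω u v) * a)) := by
    have hrw : (fun u' => -(1 / 2) * u' * Real.exp (-2 * ω u' v)
        - (1 / 2) * v * (deriv (fun v' => ω u' v') v) ^ 2
        - u' * Real.exp (ω u' v))
        = fun u' => -(1 / 2) * u' * Real.exp (-2 * ω u' v)
        - (1 / 2) * v * (G2 (u', v)) ^ 2
        - u' * Real.exp (ω u' v) := by
      funext u'
      rw [(hωv u' v).deriv]
    rw [hrw]
    have h1 : HasDerivAt (fun u' : ℝ => -(1 / 2) * u' * Real.exp (-2 * ω u' v))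
        (-(1 / 2) * Real.exp (-2 * ω u v) + -(1 / 2) * u * (Real.exp (-2 * ω u v) * (-2 * a))) u := by
      exact (((hasDerivAt_id u).const_mul (-(1/2) : ℝ)).mul
        ((hωu u v).const_mul (-2 : ℝ)).exp).congr_deriv (by simp only [id_eq]; ring)
    have h2 : HasDerivAt (fun u' : ℝ => (1 / 2) * v * (G2 (u', v)) ^ 2)
        ((1 / 2) * v * (2 * b ^ 1 * (fderiv ℝ G2 (u, v) (1, 0)))) u := by
      exact ((hderiv_fst hG2d u v).pow 2).const_mul ((1 / 2) * v) |>.congr_deriv (by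
        push_cast; ring)
    have h3 : HasDerivAt (fun u' : ℝ => u' * Real.exp (ω u' v))
        (1 * Real.exp (ω u v) + u * (Real.exp (ω u v) * a)) u :=
      (hasDerivAt_id u).mul (hωu u v).exp
    exact ((h1.sub h2).sub h3).deriv
  have hd2 : deriv (fun v' => (1 / 2) * u * (deriv (fun u' => ω u' v') u) ^ 2
      + v' * Real.exp (ω u v') + (1 / 2) * v' * Real.exp (-2 * ω u v')) v
      = (1 / 2) * u * (2 * a ^ 1 * (fderiv ℝ G1 (u, v) (0, 1)))
        + (1 * Real.exp (ω u v) + v * (Real.exp (ω u v) * b))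
        + ((1 / 2) * Real.exp (-2 * ω u v) + (1 / 2) * v * (Real.exp (-2 * ω u v) * (-2 * b))) := by
    have hrw : (fun v' => (1 / 2) * u * (deriv (fun u' => ω u' v') u) ^ 2
        + v' * Real.exp (ω u v') + (1 / 2) * v' * Real.exp (-2 * ω u v'))
        = fun v' => (1 / 2) * u * (G1 (u, v')) ^ 2
        + v' * Real.exp (ω u v') + (1 / 2) * v' * Real.exp (-2 * ω u v') := by
      funext v'
      rw [(hωu u v').deriv]
    rw [hrw]
    have h1 : HasDerivAt (fun v' : ℝ => (1 / 2) * u * (G1 (u, v')) ^ 2)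
        ((1 / 2) * u * (2 * a ^ 1 * (fderiv ℝ G1 (u, v) (0, 1)))) v := by
      exact ((hderiv_snd hG1d u v).pow 2).const_mul ((1 / 2) * u) |>.congr_deriv (by
        push_cast; ring)
    have h2 : HasDerivAt (fun v' : ℝ => v' * Real.exp (ω u v'))
        (1 * Real.exp (ω u v) + v * (Real.exp (ω u v) * b)) v :=
      (hasDerivAt_id v).mul (hωv u v).exp
    have h3 : HasDerivAt (fun v' : ℝ => (1 / 2) * v' * Real.exp (-2 * ω u v'))
        ((1 / 2) * Real.exp (-2 * ω u v) + (1 / 2) * v * (Real.exp (-2 * ω u v) * (-2 * b))) v := by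
      exact (((hasDerivAt_id v).const_mul ((1/2) : ℝ)).mul
        ((hωv u v).const_mul (-2 : ℝ)).exp).congr_deriv (by simp only [id_eq]; ring)
    exact ((h1.add h2).add h3).deriv
  rw [hd1, hd2, hm1, hm2, ← hE1, ← hE2]
  ring
end
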